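/- arXiv:1305.5826 — 2 statements merged into one kernel-verified Lean document; each statement's English description precedes it below -/
import Mathlib

section
/- (Theorem 2, covariance part: pPIC equals PIC.) For every block index m, the pPIC predictive covariance equals the centralized PIC predictive covariance: Σ_{U_m U_m} − (Φ_{U_m S}^m Σ_{SS}^{-1} Σ_{S U_m} − Σ_{U_m S} Σ_{SS}^{-1} Σ̇_{S U_m}^m − Φ_{U_m S}^m Σ̈_{SS}^{-1} Φ_{S U_m}^m) − Σ̇_{U_m U_m}^m = Σ_{U_m U_m} − Γ̃_{U_m D} (Γ_{DD} + Λ)^{-1} Γ̃_{D U_m}, where Γ̃_{D U_m} is the transpose of Γ̃_{U_m D}, Φ_{S U_m}^m is the transpose of Φ_{U_m S}^m, and Γ_{DD} + Λ is assumed invertible. -/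
/-!
`Γ_DD + Λ = Σ_DS Σ_SS⁻¹ Σ_SD + Λ` is a low-rank update of the block-diagonal `Λ`, so by the
Woodbury identity `(Γ_DD + Λ)⁻¹ = Λ⁻¹ - Λ⁻¹ Σ_DS Σ̈_SS⁻¹ Σ_SD Λ⁻¹`, because
`Σ_SS + Σ_SD Λ⁻¹ Σ_DS = Σ_SS + ∑ₘ Σ̇ᵐ_SS = Σ̈_SS`. Outside block `m` the row `Γ̃_{U_m D}` equals
`Σ_{U_m S} Σ_SS⁻¹ Σ_SD`, so each of the products `Γ̃ Λ⁻¹ Γ̃ᵀ`, `Γ̃ Λ⁻¹ Σ_DS`, `Σ_SD Λ⁻¹ Γ̃ᵀ` is a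
multiple of `∑ₘ Σ̇ᵐ_SS = Σ̈_SS - Σ_SS` corrected by block `m` alone; for instance
`Γ̃ Λ⁻¹ Σ_DS = Σ_{U_m S} Σ_SS⁻¹ Σ̈_SS - Φᵐ_{U_m S}`. What remains is a matrix identity.
-/

open Matrix

namespace Matrix

section BlockDiagonal

variable {R ι α β S : Type*} {D : ι → Type*} [Fintype ι] [DecidableEq ι] [∀ i, Fintype (D i)]

theorem mul_blockDiagonal'_mul [NonUnitalNonAssocSemiring R] (X : Matrix α (Σ i, D i) R)
    (P : ∀ i, Matrix (D i) (D i) R) (Y : Matrix (Σ i, D i) β R) :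
    X * blockDiagonal' P * Y
      = ∑ i, X.submatrix id (Sigma.mk i) * P i * Y.submatrix (Sigma.mk i) id := by
  ext a b
  simp only [mul_apply, sum_apply, submatrix_apply, id, blockDiagonal'_apply,
    ← Finset.univ_sigma_univ, Finset.sum_sigma]
  refine Finset.sum_congr rfl fun i _ => Finset.sum_congr rfl fun d _ => ?_
  rw [Fintype.sum_eq_single i fun j hj =>
    Finset.sum_eq_zero fun e _ => by rw [dif_neg hj, mul_zero]]
  simp

theorem mul_blockDiagonal'_mul_eq_add_of_ne [Ring R] [Fintype S] (m : ι)
    (X : Matrix α (Σ i, D i) R) (P : ∀ i, Matrix (D i) (D i) R) (Y : Matrix (Σ i, D i) β R)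
    (G : Matrix α S R) (F : ∀ i, Matrix S (D i) R) (F' : ∀ i, Matrix (D i) S R)
    (H : Matrix S β R)
    (hX : ∀ i ≠ m, X.submatrix id (Sigma.mk i) = G * F i)
    (hY : ∀ i ≠ m, Y.submatrix (Sigma.mk i) id = F' i * H) :
    X * blockDiagonal' P * Y
      = G * (∑ i, F i * P i * F' i) * H
        + (X.submatrix id (Sigma.mk m) * P m * Y.submatrix (Sigma.mk m) id
          - G * (F m * P m * F' m) * H) := by
  rw [mul_blockDiagonal'_mul, Matrix.mul_sum, Matrix.sum_mul, ← sub_eq_iff_eq_add',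
    ← Finset.sum_sub_distrib]
  refine Fintype.sum_eq_single m fun i hi => ?_
  rw [hX i hi, hY i hi, sub_eq_zero]
  simp only [Matrix.mul_assoc]

variable [∀ i, DecidableEq (D i)] [CommRing R]

theorem blockDiagonal'_mul_blockDiagonal'_nonsing_inv (Q : ∀ i, Matrix (D i) (D i) R)
    (hQ : ∀ i, IsUnit (Q i).det) :
    blockDiagonal' Q * blockDiagonal' (fun i => (Q i)⁻¹) = 1 := by
  rw [← blockDiagonal'_mul, ← blockDiagonal'_one]
  exact congrArg blockDiagonal' (funext fun i => mul_nonsing_inv _ (hQ i))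

theorem inv_blockDiagonal' (Q : ∀ i, Matrix (D i) (D i) R) (hQ : ∀ i, IsUnit (Q i).det) :
    (blockDiagonal' Q)⁻¹ = blockDiagonal' fun i => (Q i)⁻¹ :=
  inv_eq_right_inv (blockDiagonal'_mul_blockDiagonal'_nonsing_inv Q hQ)

theorem add_mul_nonsing_inv_mul_inv_eq_sub {n : Type*} [Fintype n] [DecidableEq n] [Fintype S]
    [DecidableEq S] (Λ : Matrix n n R) (U : Matrix n S R) (K : Matrix S S R) (V : Matrix S n R)
    (hΛ : IsUnit Λ.det) (hK : IsUnit K.det) (hKΛ : IsUnit (K + V * Λ⁻¹ * U).det) :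
    (Λ + U * K⁻¹ * V)⁻¹ = Λ⁻¹ - Λ⁻¹ * U * (K + V * Λ⁻¹ * U)⁻¹ * V * Λ⁻¹ := by
  have hK' : IsUnit K⁻¹ := (isUnit_iff_isUnit_det _).mpr (isUnit_nonsing_inv_det _ hK)
  have h := add_mul_mul_inv_eq_sub Λ U K⁻¹ V ((isUnit_iff_isUnit_det _).mpr hΛ) hK'
    (by rwa [nonsing_inv_nonsing_inv K hK, isUnit_iff_isUnit_det])
  rwa [nonsing_inv_nonsing_inv K hK] at h

theorem inv_transpose_mul_nonsing_inv_mul_add_blockDiagonal' [Fintype S] [DecidableEq S]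
    (F : Matrix S (Σ i, D i) R) (K : Matrix S S R) (Q : ∀ i, Matrix (D i) (D i) R)
    (hK : IsUnit K.det) (hQ : ∀ i, IsUnit (Q i).det)
    (hKQ : IsUnit (K + ∑ i, F.submatrix id (Sigma.mk i) * (Q i)⁻¹
      * (F.submatrix id (Sigma.mk i))ᵀ).det) :
    (Fᵀ * K⁻¹ * F + blockDiagonal' Q)⁻¹
      = blockDiagonal' (fun i => (Q i)⁻¹) - blockDiagonal' (fun i => (Q i)⁻¹) * Fᵀ
        * (K + ∑ i, F.submatrix id (Sigma.mk i) * (Q i)⁻¹ * (F.submatrix id (Sigma.mk i))ᵀ)⁻¹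
        * F * blockDiagonal' (fun i => (Q i)⁻¹) := by
  have hsum : F * blockDiagonal' (fun i => (Q i)⁻¹) * Fᵀ
      = ∑ i, F.submatrix id (Sigma.mk i) * (Q i)⁻¹ * (F.submatrix id (Sigma.mk i))ᵀ := by
    simp only [mul_blockDiagonal'_mul, transpose_submatrix]
  have hQdet : IsUnit (blockDiagonal' Q).det :=
    isUnit_det_of_right_inverse (blockDiagonal'_mul_blockDiagonal'_nonsing_inv Q hQ)
  rw [add_comm, add_mul_nonsing_inv_mul_inv_eq_sub _ _ _ _ hQdet hK
    (by rwa [inv_blockDiagonal' Q hQ, hsum]), inv_blockDiagonal' Q hQ, hsum]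

end BlockDiagonal

theorem isSymm_sub_transpose_mul_nonsing_inv_mul {R n S : Type*} [CommRing R] [Fintype S]
    [DecidableEq S] {A : Matrix n n R} {K : Matrix S S R} (hA : A.IsSymm) (hK : K.IsSymm)
    (B : Matrix S n R) : (A - Bᵀ * K⁻¹ * B).IsSymm := by
  refine hA.sub ?_
  rw [IsSymm, transpose_mul, transpose_mul, transpose_transpose, hK.inv.eq, Matrix.mul_assoc]

end Matrix

/-- Here `Kdd - K` stands for the sum of all local summaries `∑ₘ Σ̇ᵐ_SS`, and the left-hand side is
`Γ̃ Λ⁻¹ Γ̃ᵀ - Γ̃ Λ⁻¹ Σ_DS Σ̈_SS⁻¹ Σ_SD Λ⁻¹ Γ̃ᵀ` after splitting off block `m`, whose local data are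
`B = Σ_{S D_m}`, `C = Σ_{U_m D_m}` and `P = Σ_{D_m D_m|S}⁻¹`. -/
theorem ppic_covariance_identity {R S U V : Type*} [CommRing R] [Fintype S] [DecidableEq S]
    [Fintype V] (K Kdd : Matrix S S R) (A Φ : Matrix U S R) (B : Matrix S V R)
    (C : Matrix U V R) (P : Matrix V V R) (hK : IsUnit K.det) (hKsymm : K.IsSymm)
    (hKdd : IsUnit Kdd.det) (hP : P.IsSymm)
    (hΦ : Φ = A + A * K⁻¹ * (B * P * Bᵀ) - C * P * Bᵀ) :
    A * K⁻¹ * (Kdd - K) * (A * K⁻¹)ᵀ + (C * P * Cᵀ - A * K⁻¹ * (B * P * Bᵀ) * (A * K⁻¹)ᵀ)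
      - (A * K⁻¹ * (Kdd - K) + (C * P * Bᵀ - A * K⁻¹ * (B * P * Bᵀ))) * Kdd⁻¹
        * ((Kdd - K) * (A * K⁻¹)ᵀ + (B * P * Cᵀ - B * P * Bᵀ * (A * K⁻¹)ᵀ))
      = Φ * K⁻¹ * Aᵀ - A * K⁻¹ * (B * P * Cᵀ) - Φ * Kdd⁻¹ * Φᵀ + C * P * Cᵀ := by
  subst hΦ
  simp only [transpose_mul, transpose_add, transpose_sub, transpose_transpose,
    transpose_nonsing_inv, hKsymm.eq, hP.eq, Matrix.mul_add, Matrix.add_mul, Matrix.mul_sub,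
    Matrix.sub_mul, Matrix.mul_assoc, nonsing_inv_mul_cancel_left K _ hK,
    mul_nonsing_inv_cancel_left K _ hK, nonsing_inv_mul_cancel_left Kdd _ hKdd,
    mul_nonsing_inv_cancel_left Kdd _ hKdd]
  abel

theorem stmt_12_general
    {M : ℕ}
    {S : Type} [Fintype S] [DecidableEq S]
    {D : Fin M → Type} [∀ m, Fintype (D m)] [∀ m, DecidableEq (D m)]
    (KSS : Matrix S S ℝ) (hKSSsym : KSSᵀ = KSS) (hKSSinv : IsUnit KSS.det)
    (KSD : ∀ m, Matrix S (D m) ℝ)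
    (KDD : ∀ m, Matrix (D m) (D m) ℝ) (hKDDsym : ∀ m, (KDD m)ᵀ = KDD m)
    (Q : ∀ m, Matrix (D m) (D m) ℝ)
    (hQ : ∀ m, Q m = KDD m - (KSD m)ᵀ * KSS⁻¹ * KSD m)
    (hQinv : ∀ m, IsUnit (Q m).det)
    (Λ : Matrix ((m : Fin M) × D m) ((m : Fin M) × D m) ℝ)
    (hΛ : Λ = Matrix.blockDiagonal' Q)
    (KSDf : Matrix S ((m : Fin M) × D m) ℝ)
    (hKSDf : KSDf = Matrix.of fun s d => KSD d.1 s d.2)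
    (Kdd : Matrix S S ℝ)
    (hKdd : Kdd = KSS + ∑ m, KSD m * (Q m)⁻¹ * (KSD m)ᵀ)
    (hKddinv : IsUnit Kdd.det)
    {U : Fin M → Type} [∀ m, Fintype (U m)]
    (KUS : ∀ m, Matrix (U m) S ℝ)
    (KUU : ∀ m, Matrix (U m) (U m) ℝ)
    (KUD : ∀ m, Matrix (U m) (D m) ℝ)
    (tΓ : ∀ m, Matrix (U m) ((k : Fin M) × D k) ℝ)
    (htΓ : ∀ m, tΓ m = Matrix.of fun u d =>
      if h : d.1 = m then KUD m u (cast (congrArg D h) d.2)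
      else (KUS m * KSS⁻¹ * KSD d.1) u d.2)
    (Φm : ∀ m, Matrix (U m) S ℝ)
    (hΦm : ∀ m, Φm m = KUS m + KUS m * KSS⁻¹ * (KSD m * (Q m)⁻¹ * (KSD m)ᵀ)
      - KUD m * (Q m)⁻¹ * (KSD m)ᵀ)
    (ΓDD : Matrix ((m : Fin M) × D m) ((m : Fin M) × D m) ℝ)
    (hΓDD : ΓDD = KSDfᵀ * KSS⁻¹ * KSDf)
    :
    ∀ m, KUU m
        - (Φm m * KSS⁻¹ * (KUS m)ᵀ
           - KUS m * KSS⁻¹ * (KSD m * (Q m)⁻¹ * (KUD m)ᵀ)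
           - Φm m * Kdd⁻¹ * (Φm m)ᵀ)
        - KUD m * (Q m)⁻¹ * (KUD m)ᵀ
      = KUU m - tΓ m * (ΓDD + Λ)⁻¹ * (tΓ m)ᵀ := by
  intro m
  set G := KUS m * KSS⁻¹
  set Λi := blockDiagonal' fun k => (Q k)⁻¹
  have hFblock : ∀ k, KSDf.submatrix id (Sigma.mk k) = KSD k := fun k => by subst hKSDf; rfl
  have hΓself : (tΓ m).submatrix id (Sigma.mk m) = KUD m := by ext u d; simp [htΓ]
  have hΓoff : ∀ k ≠ m, (tΓ m).submatrix id (Sigma.mk k) = G * KSD k := fun k hk => by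
    ext u d; simp [htΓ, hk, G]
  have hΓoffT : ∀ k ≠ m, (tΓ m)ᵀ.submatrix (Sigma.mk k) id = (KSD k)ᵀ * Gᵀ := fun k hk => by
    rw [← transpose_submatrix, hΓoff k hk, transpose_mul]
  have hWood : tΓ m * (ΓDD + Λ)⁻¹ * (tΓ m)ᵀ
      = tΓ m * Λi * (tΓ m)ᵀ - tΓ m * Λi * KSDfᵀ * Kdd⁻¹ * (KSDf * Λi * (tΓ m)ᵀ) := by
    have h := inv_transpose_mul_nonsing_inv_mul_add_blockDiagonal' KSDf KSS Q hKSSinv hQinv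
    simp only [hFblock, ← hKdd] at h
    rw [hΓDD, hΛ, h hKddinv]
    simp only [Matrix.mul_sub, Matrix.sub_mul, Matrix.mul_assoc, Λi]
  have hsum : ∑ k, KSD k * (Q k)⁻¹ * (KSD k)ᵀ = Kdd - KSS := by rw [hKdd, add_sub_cancel_left]
  rw [hWood,
    mul_blockDiagonal'_mul_eq_add_of_ne m _ _ _ G KSD (fun k => (KSD k)ᵀ) Gᵀ hΓoff hΓoffT,
    mul_blockDiagonal'_mul_eq_add_of_ne m _ _ _ G KSD (fun k => (KSD k)ᵀ) 1 hΓoff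
      (fun k _ => by rw [← transpose_submatrix, hFblock, Matrix.mul_one]),
    mul_blockDiagonal'_mul_eq_add_of_ne m _ _ _ 1 KSD (fun k => (KSD k)ᵀ) Gᵀ
      (fun k _ => by rw [hFblock, Matrix.one_mul]) hΓoffT,
    ← transpose_submatrix, ← transpose_submatrix, hΓself, hFblock, hsum]
  simp only [Matrix.mul_one, Matrix.one_mul]
  rw [ppic_covariance_identity KSS Kdd (KUS m) (Φm m) (KSD m) (KUD m) (Q m)⁻¹ hKSSinv hKSSsym
    hKddinv (hQ m ▸ (isSymm_sub_transpose_mul_nonsing_inv_mul (hKDDsym m) hKSSsym _).inv) (hΦm m)]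
  abel

theorem stmt_12
    {M : ℕ} (hM : 0 < M)
    {S : Type} [Fintype S] [DecidableEq S]
    {D : Fin M → Type} [∀ m, Fintype (D m)] [∀ m, DecidableEq (D m)]
    (KSS : Matrix S S ℝ) (hKSSsym : KSSᵀ = KSS) (hKSSinv : IsUnit KSS.det)
    (KSD : ∀ m, Matrix S (D m) ℝ)
    (KDD : ∀ m, Matrix (D m) (D m) ℝ) (hKDDsym : ∀ m, (KDD m)ᵀ = KDD m)
    (Q : ∀ m, Matrix (D m) (D m) ℝ)
    (hQ : ∀ m, Q m = KDD m - (KSD m)ᵀ * KSS⁻¹ * KSD m)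
    (hQinv : ∀ m, IsUnit (Q m).det)
    (Λ : Matrix ((m : Fin M) × D m) ((m : Fin M) × D m) ℝ)
    (hΛ : Λ = Matrix.blockDiagonal' Q)
    (KSDf : Matrix S ((m : Fin M) × D m) ℝ)
    (hKSDf : KSDf = Matrix.of fun s d => KSD d.1 s d.2)
    (Kdd : Matrix S S ℝ)
    (hKdd : Kdd = KSS + ∑ m, KSD m * (Q m)⁻¹ * (KSD m)ᵀ)
    (hKddinv : IsUnit Kdd.det)
    {U : Fin M → Type} [∀ m, Fintype (U m)] [∀ m, DecidableEq (U m)]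
    (KUS : ∀ m, Matrix (U m) S ℝ)
    (KUU : ∀ m, Matrix (U m) (U m) ℝ)
    (KUD : ∀ m, Matrix (U m) (D m) ℝ)
    (tΓ : ∀ m, Matrix (U m) ((k : Fin M) × D k) ℝ)
    (htΓ : ∀ m, tΓ m = Matrix.of fun u d =>
      if h : d.1 = m then KUD m u (cast (congrArg D h) d.2)
      else (KUS m * KSS⁻¹ * KSD d.1) u d.2)
    (Φm : ∀ m, Matrix (U m) S ℝ)
    (hΦm : ∀ m, Φm m = KUS m + KUS m * KSS⁻¹ * (KSD m * (Q m)⁻¹ * (KSD m)ᵀ)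
      - KUD m * (Q m)⁻¹ * (KSD m)ᵀ)
    (ΓDD : Matrix ((m : Fin M) × D m) ((m : Fin M) × D m) ℝ)
    (hΓDD : ΓDD = KSDfᵀ * KSS⁻¹ * KSDf)
    (hGLinv : IsUnit (ΓDD + Λ).det)
    :
    ∀ m, KUU m
        - (Φm m * KSS⁻¹ * (KUS m)ᵀ
           - KUS m * KSS⁻¹ * (KSD m * (Q m)⁻¹ * (KUD m)ᵀ)
           - Φm m * Kdd⁻¹ * (Φm m)ᵀ)
        - KUD m * (Q m)⁻¹ * (KUD m)ᵀ
      = KUU m - tΓ m * (ΓDD + Λ)⁻¹ * (tΓ m)ᵀ :=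
  stmt_12_general KSS hKSSsym hKSSinv KSD KDD hKDDsym Q hQ hQinv Λ hΛ KSDf hKSDf Kdd hKdd hKddinv
    KUS KUU KUD tΓ htΓ Φm hΦm ΓDD hΓDD
end

section
/- (Cross-block PIC covariance equivalence.) For any two distinct block indices i ≠ j, Σ_{U_i U_j|S} + Φ_{U_i S}^i Σ̈_{SS}^{-1} Φ_{S U_j}^j = Σ_{U_i U_j} − Γ̃_{U_i D} (Γ_{DD} + Λ)^{-1} Γ̃_{D U_j}, where Σ_{U_i U_j|S} := Σ_{U_i U_j} − Γ_{U_i U_j}, Γ̃_{D U_j} is the transpose of Γ̃_{U_j D}, Φ_{S U_j}^j is the transpose of Φ_{U_j S}^j, and Γ_{DD} + Λ is assumed invertible. -/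
/-!
Write `tΓᵢ = Σ_{UᵢS} Σ_{SS}⁻¹ Σ_{SD} + Eᵢ`, where the block row `Eᵢ` carries the residual
`Σ_{UᵢDᵢ} - Γ_{UᵢDᵢ}` in block `i` and vanishes elsewhere, and expand `(Γ_{DD} + Λ)⁻¹` by the
Woodbury identity, whose capacitance matrix `Σ_{SS} + Σ_{SD} Λ⁻¹ Σ_{DS}` is exactly `Σ̈_{SS}`.
As `Λ⁻¹` is block diagonal and `i ≠ j`, the cross term `Eᵢ Λ⁻¹ Eⱼᵀ` vanishes, and what remains
regroups as `Σ_{UᵢS} Σ_{SS}⁻¹ Σ_{SUⱼ} - Φᵢ Σ̈_{SS}⁻¹ Φⱼᵀ` because `Φᵢ = Σ_{UᵢS} - Eᵢ Λ⁻¹ Σ_{DS}`.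
-/

open Matrix

namespace Matrix

section Woodbury

variable {R : Type*} [CommRing R]
  {S D U V : Type*} [Fintype S] [DecidableEq S] [Fintype D] [DecidableEq D]
  {K : Matrix S S R} {L : Matrix D D R} {A : Matrix S D R} {A' : Matrix D S R}

theorem mul_inv_mul_add_inv_eq_sub (hK : IsUnit K.det) (hL : IsUnit L.det)
    (hKL : IsUnit (K + A * L⁻¹ * A').det) :
    (A' * K⁻¹ * A + L)⁻¹ = L⁻¹ - L⁻¹ * A' * (K + A * L⁻¹ * A')⁻¹ * A * L⁻¹ := by
  rw [add_comm, add_mul_mul_inv_eq_sub L A' K⁻¹ A ((isUnit_iff_isUnit_det L).2 hL)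
    (isUnit_nonsing_inv_iff.2 ((isUnit_iff_isUnit_det K).2 hK)), nonsing_inv_nonsing_inv K hK]
  rwa [nonsing_inv_nonsing_inv K hK, isUnit_iff_isUnit_det]

theorem add_mul_inv_mul_add_eq_of_mul_inv_mul_eq_zero (hK : IsUnit K.det) (hL : IsUnit L.det)
    (hKL : IsUnit (K + A * L⁻¹ * A').det)
    (B : Matrix U S R) (E : Matrix U D R) (C : Matrix S V R) (F : Matrix D V R)
    (hEF : E * L⁻¹ * F = 0) :
    (B * A + E) * (A' * K⁻¹ * A + L)⁻¹ * (A' * C + F)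
      = B * K * C - (B * K - E * L⁻¹ * A') * (K + A * L⁻¹ * A')⁻¹ * (K * C - A * L⁻¹ * F) := by
  set G := (K + A * L⁻¹ * A')⁻¹
  have hGl : G * (K + A * L⁻¹ * A') = 1 := nonsing_inv_mul _ hKL
  have hGr : (K + A * L⁻¹ * A') * G = 1 := mul_nonsing_inv _ hKL
  have hW : (A' * K⁻¹ * A + L)⁻¹ = L⁻¹ - L⁻¹ * A' * G * A * L⁻¹ :=
    mul_inv_mul_add_inv_eq_sub hK hL hKL
  have hAW : A * (A' * K⁻¹ * A + L)⁻¹ = K * G * A * L⁻¹ := by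
    rw [hW]
    calc A * (L⁻¹ - L⁻¹ * A' * G * A * L⁻¹)
        = (K + A * L⁻¹ * A') * G * A * L⁻¹ - A * L⁻¹ * A' * G * A * L⁻¹ := by
          rw [hGr, Matrix.one_mul, Matrix.mul_sub]; simp only [Matrix.mul_assoc]
      _ = K * G * A * L⁻¹ := by simp only [Matrix.add_mul]; abel
  have hWA' : (A' * K⁻¹ * A + L)⁻¹ * A' = L⁻¹ * A' * G * K := by
    rw [hW]
    calc (L⁻¹ - L⁻¹ * A' * G * A * L⁻¹) * A'
        = L⁻¹ * A' * G * (K + A * L⁻¹ * A') - L⁻¹ * A' * G * A * L⁻¹ * A' := by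
          rw [Matrix.mul_assoc (L⁻¹ * A') G (K + A * L⁻¹ * A'), hGl, Matrix.mul_one, Matrix.sub_mul]
      _ = L⁻¹ * A' * G * K := by simp only [Matrix.mul_add, Matrix.mul_assoc]; abel
  have hAWA' : A * (A' * K⁻¹ * A + L)⁻¹ * A' = K - K * G * K := by
    calc A * (A' * K⁻¹ * A + L)⁻¹ * A' = K * G * A * L⁻¹ * A' := by rw [hAW]
      _ = K * G * (K + A * L⁻¹ * A') - K * G * K := by
          rw [Matrix.mul_add]; simp only [Matrix.mul_assoc]; abel
      _ = K - K * G * K := by rw [Matrix.mul_assoc K G, hGl, Matrix.mul_one]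
  have hEWF : E * (A' * K⁻¹ * A + L)⁻¹ * F = -(E * L⁻¹ * A' * G * A * L⁻¹ * F) := by
    rw [hW, Matrix.mul_sub, Matrix.sub_mul, hEF, zero_sub]
    simp only [Matrix.mul_assoc]
  calc (B * A + E) * (A' * K⁻¹ * A + L)⁻¹ * (A' * C + F)
      = B * (A * (A' * K⁻¹ * A + L)⁻¹ * A') * C + B * (A * (A' * K⁻¹ * A + L)⁻¹) * F
        + E * ((A' * K⁻¹ * A + L)⁻¹ * A') * C + E * (A' * K⁻¹ * A + L)⁻¹ * F := by
        simp only [Matrix.add_mul, Matrix.mul_add, Matrix.mul_assoc]; abel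
    _ = _ := by
        rw [hAWA', hAW, hWA', hEWF]
        simp only [Matrix.mul_sub, Matrix.sub_mul, Matrix.mul_assoc]
        abel

end Woodbury

theorem IsSymm.transpose_mul_mul {R m n : Type*} [CommSemiring R] [Fintype n] {B : Matrix n n R}
    (hB : B.IsSymm) (A : Matrix n m R) : (Aᵀ * B * A).IsSymm := by
  rw [IsSymm, transpose_mul, transpose_mul, transpose_transpose, hB.eq, Matrix.mul_assoc]

section BlockRow

variable {ι R α β : Type*} [CommRing R] {d : ι → Type*}

def blockRow (g : ∀ k, Matrix α (d k) R) : Matrix α ((k : ι) × d k) R :=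
  of fun a x => g x.1 a x.2

theorem mul_blockRow [Fintype α] (B : Matrix β α R) (g : ∀ k, Matrix α (d k) R) :
    B * blockRow g = blockRow fun k => B * g k :=
  rfl

theorem of_dite_eq_blockRow_add_blockRow_single [DecidableEq ι] (i : ι) (X : Matrix α (d i) R)
    (g : ∀ k, Matrix α (d k) R) :
    (of fun a x => if h : x.1 = i then X a (cast (congrArg d h) x.2) else g x.1 a x.2)
      = blockRow g + blockRow (Pi.single i (X - g i)) := by
  ext a ⟨k, x⟩
  by_cases h : k = i
  · subst h
    simp [blockRow]
  · simp [blockRow, h]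

theorem blockRow_mul_blockDiagonal'_mul_transpose_blockRow [Fintype ι] [DecidableEq ι]
    [∀ k, Fintype (d k)] (g : ∀ k, Matrix α (d k) R)
    (f : ∀ k, Matrix (d k) (d k) R) (h : ∀ k, Matrix β (d k) R) :
    blockRow g * blockDiagonal' f * (blockRow h)ᵀ = ∑ k, g k * f k * (h k)ᵀ := by
  ext a b
  simp only [mul_apply, sum_apply, blockRow, transpose_apply, of_apply, blockDiagonal'_apply]
  rw [Finset.sum_sigma', Finset.univ_sigma_univ]
  refine Finset.sum_congr rfl fun x _ => ?_
  congr 1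
  rw [← Finset.univ_sigma_univ, Finset.sum_sigma, Finset.sum_eq_single x.fst]
  · simp
  · intro k _ hk
    simp [dif_neg hk]
  · simp

variable [Fintype ι] [DecidableEq ι] [∀ k, Fintype (d k)]

theorem blockRow_single_mul_blockDiagonal'_mul_transpose_blockRow (i : ι) (X : Matrix α (d i) R)
    (f : ∀ k, Matrix (d k) (d k) R) (h : ∀ k, Matrix β (d k) R) :
    blockRow (Pi.single i X) * blockDiagonal' f * (blockRow h)ᵀ = X * f i * (h i)ᵀ := by
  rw [blockRow_mul_blockDiagonal'_mul_transpose_blockRow, Fintype.sum_eq_single i]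
  · simp
  · intro k hk
    simp [hk]

theorem blockRow_mul_blockDiagonal'_mul_transpose_blockRow_single (g : ∀ k, Matrix α (d k) R)
    (f : ∀ k, Matrix (d k) (d k) R) (j : ι) (Y : Matrix β (d j) R) :
    blockRow g * blockDiagonal' f * (blockRow (Pi.single j Y))ᵀ = g j * f j * Yᵀ := by
  rw [blockRow_mul_blockDiagonal'_mul_transpose_blockRow, Fintype.sum_eq_single j]
  · simp
  · intro k hk
    simp [hk]

theorem blockRow_single_mul_blockDiagonal'_mul_transpose_blockRow_single {i j : ι} (hij : i ≠ j)
    (X : Matrix α (d i) R) (f : ∀ k, Matrix (d k) (d k) R) (Y : Matrix β (d j) R) :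
    blockRow (Pi.single i X) * blockDiagonal' f * (blockRow (Pi.single j Y))ᵀ = 0 := by
  rw [blockRow_single_mul_blockDiagonal'_mul_transpose_blockRow, Pi.single_eq_of_ne hij,
    transpose_zero, Matrix.mul_zero]

theorem blockDiagonal'_mul_blockDiagonal'_inv [∀ k, DecidableEq (d k)]
    {Q : ∀ k, Matrix (d k) (d k) R} (hQ : ∀ k, IsUnit (Q k).det) :
    blockDiagonal' Q * blockDiagonal' (fun k => (Q k)⁻¹) = 1 := by
  rw [← blockDiagonal'_mul]
  simp only [fun k => mul_nonsing_inv (Q k) (hQ k)]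
  exact blockDiagonal'_one

end BlockRow

end Matrix

theorem stmt_13_general
    {M : ℕ}
    {S : Type} [Fintype S] [DecidableEq S]
    {D : Fin M → Type} [∀ m, Fintype (D m)] [∀ m, DecidableEq (D m)]
    (KSS : Matrix S S ℝ) (hKSSsym : KSSᵀ = KSS) (hKSSinv : IsUnit KSS.det)
    (KSD : ∀ m, Matrix S (D m) ℝ)
    (KDD : ∀ m, Matrix (D m) (D m) ℝ) (hKDDsym : ∀ m, (KDD m)ᵀ = KDD m)
    (Q : ∀ m, Matrix (D m) (D m) ℝ)
    (hQ : ∀ m, Q m = KDD m - (KSD m)ᵀ * KSS⁻¹ * KSD m)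
    (hQinv : ∀ m, IsUnit (Q m).det)
    (Λ : Matrix ((m : Fin M) × D m) ((m : Fin M) × D m) ℝ)
    (hΛ : Λ = Matrix.blockDiagonal' Q)
    (KSDf : Matrix S ((m : Fin M) × D m) ℝ)
    (hKSDf : KSDf = Matrix.of fun s d => KSD d.1 s d.2)
    (Kdd : Matrix S S ℝ)
    (hKdd : Kdd = KSS + ∑ m, KSD m * (Q m)⁻¹ * (KSD m)ᵀ)
    (hKddinv : IsUnit Kdd.det)
    {U : Fin M → Type}
    (KUS : ∀ m, Matrix (U m) S ℝ)
    (KUD : ∀ m, Matrix (U m) (D m) ℝ)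
    (tΓ : ∀ m, Matrix (U m) ((k : Fin M) × D k) ℝ)
    (htΓ : ∀ m, tΓ m = Matrix.of fun u d =>
      if h : d.1 = m then KUD m u (cast (congrArg D h) d.2)
      else (KUS m * KSS⁻¹ * KSD d.1) u d.2)
    (Φm : ∀ m, Matrix (U m) S ℝ)
    (hΦm : ∀ m, Φm m = KUS m + KUS m * KSS⁻¹ * (KSD m * (Q m)⁻¹ * (KSD m)ᵀ)
      - KUD m * (Q m)⁻¹ * (KSD m)ᵀ)
    (ΓDD : Matrix ((m : Fin M) × D m) ((m : Fin M) × D m) ℝ)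
    (hΓDD : ΓDD = KSDfᵀ * KSS⁻¹ * KSDf)
    (i j : Fin M) (hij : i ≠ j) (KUiUj : Matrix (U i) (U j) ℝ) :
    (KUiUj - KUS i * KSS⁻¹ * (KUS j)ᵀ) + Φm i * Kdd⁻¹ * (Φm j)ᵀ
      = KUiUj - tΓ i * (ΓDD + Λ)⁻¹ * (tΓ j)ᵀ := by
  have hKSSinv_symm : (KSS⁻¹).IsSymm := IsSymm.inv hKSSsym
  have hQinv_symm (m : Fin M) : ((Q m)⁻¹).IsSymm :=
    IsSymm.inv (hQ m ▸ IsSymm.sub (hKDDsym m) (hKSSinv_symm.transpose_mul_mul (KSD m)))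
  have hΛ_mul_inv : Λ * blockDiagonal' (fun m => (Q m)⁻¹) = 1 :=
    hΛ ▸ blockDiagonal'_mul_blockDiagonal'_inv hQinv
  have hΛinv : Λ⁻¹ = blockDiagonal' fun m => (Q m)⁻¹ := inv_eq_right_inv hΛ_mul_inv
  set R : ∀ m, Matrix (U m) (D m) ℝ := fun m => KUD m - KUS m * KSS⁻¹ * KSD m
  have hΦ (m : Fin M) : Φm m = KUS m - R m * (Q m)⁻¹ * (KSD m)ᵀ := by
    simp only [hΦm, R, Matrix.sub_mul, Matrix.mul_assoc]; abel
  have htΓ' (m : Fin M) :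
      tΓ m = KUS m * KSS⁻¹ * blockRow KSD + blockRow (Pi.single m (R m)) := by
    rw [mul_blockRow, htΓ m]
    exact of_dite_eq_blockRow_add_blockRow_single m (KUD m) fun k => KUS m * KSS⁻¹ * KSD k
  have hKdd' : KSS + blockRow KSD * Λ⁻¹ * (blockRow KSD)ᵀ = Kdd := by
    rw [hΛinv, blockRow_mul_blockDiagonal'_mul_transpose_blockRow, hKdd]
  have hEE : blockRow (Pi.single i (R i)) * Λ⁻¹ * (blockRow (Pi.single j (R j)))ᵀ = 0 := by
    rw [hΛinv]
    exact blockRow_single_mul_blockDiagonal'_mul_transpose_blockRow_single hij _ _ _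
  have hBK : KUS i * KSS⁻¹ * KSS = KUS i := nonsing_inv_mul_cancel_right KSS (KUS i) hKSSinv
  have hKC : KSS * (KUS j * KSS⁻¹)ᵀ = (KUS j)ᵀ := by
    rw [transpose_mul, hKSSinv_symm.eq, mul_nonsing_inv_cancel_left KSS _ hKSSinv]
  have hΦi : KUS i - blockRow (Pi.single i (R i)) * Λ⁻¹ * (blockRow KSD)ᵀ = Φm i := by
    rw [hΛinv, blockRow_single_mul_blockDiagonal'_mul_transpose_blockRow, hΦ]
  have hΦj : (KUS j)ᵀ - blockRow KSD * Λ⁻¹ * (blockRow (Pi.single j (R j)))ᵀ = (Φm j)ᵀ := by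
    rw [hΛinv, blockRow_mul_blockDiagonal'_mul_transpose_blockRow_single, hΦ]
    simp only [transpose_sub, transpose_mul, transpose_transpose, (hQinv_symm j).eq,
      Matrix.mul_assoc]
  have hA : KSDf = blockRow KSD := hKSDf
  rw [hΓDD, hA, htΓ' i, htΓ' j, transpose_add, transpose_mul,
    add_mul_inv_mul_add_eq_of_mul_inv_mul_eq_zero hKSSinv (isUnit_det_of_right_inverse hΛ_mul_inv)
      (hKdd' ▸ hKddinv) _ _ _ _ hEE, hKdd', hBK, hKC, hΦi, hΦj, transpose_mul, hKSSinv_symm.eq,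
    ← Matrix.mul_assoc]
  abel

theorem stmt_13
    {M : ℕ} (hM : 0 < M)
    {S : Type} [Fintype S] [DecidableEq S]
    {D : Fin M → Type} [∀ m, Fintype (D m)] [∀ m, DecidableEq (D m)]
    (KSS : Matrix S S ℝ) (hKSSsym : KSSᵀ = KSS) (hKSSinv : IsUnit KSS.det)
    (KSD : ∀ m, Matrix S (D m) ℝ)
    (KDD : ∀ m, Matrix (D m) (D m) ℝ) (hKDDsym : ∀ m, (KDD m)ᵀ = KDD m)
    (Q : ∀ m, Matrix (D m) (D m) ℝ)
    (hQ : ∀ m, Q m = KDD m - (KSD m)ᵀ * KSS⁻¹ * KSD m)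
    (hQinv : ∀ m, IsUnit (Q m).det)
    (Λ : Matrix ((m : Fin M) × D m) ((m : Fin M) × D m) ℝ)
    (hΛ : Λ = Matrix.blockDiagonal' Q)
    (KSDf : Matrix S ((m : Fin M) × D m) ℝ)
    (hKSDf : KSDf = Matrix.of fun s d => KSD d.1 s d.2)
    (Kdd : Matrix S S ℝ)
    (hKdd : Kdd = KSS + ∑ m, KSD m * (Q m)⁻¹ * (KSD m)ᵀ)
    (hKddinv : IsUnit Kdd.det)
    {U : Fin M → Type} [∀ m, Fintype (U m)] [∀ m, DecidableEq (U m)]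
    (KUS : ∀ m, Matrix (U m) S ℝ)
    (KUD : ∀ m, Matrix (U m) (D m) ℝ)
    (tΓ : ∀ m, Matrix (U m) ((k : Fin M) × D k) ℝ)
    (htΓ : ∀ m, tΓ m = Matrix.of fun u d =>
      if h : d.1 = m then KUD m u (cast (congrArg D h) d.2)
      else (KUS m * KSS⁻¹ * KSD d.1) u d.2)
    (Φm : ∀ m, Matrix (U m) S ℝ)
    (hΦm : ∀ m, Φm m = KUS m + KUS m * KSS⁻¹ * (KSD m * (Q m)⁻¹ * (KSD m)ᵀ)
      - KUD m * (Q m)⁻¹ * (KSD m)ᵀ)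
    (ΓDD : Matrix ((m : Fin M) × D m) ((m : Fin M) × D m) ℝ)
    (hΓDD : ΓDD = KSDfᵀ * KSS⁻¹ * KSDf)
    (hGLinv : IsUnit (ΓDD + Λ).det)
    (i j : Fin M) (hij : i ≠ j) (KUiUj : Matrix (U i) (U j) ℝ) :
    (KUiUj - KUS i * KSS⁻¹ * (KUS j)ᵀ) + Φm i * Kdd⁻¹ * (Φm j)ᵀ
      = KUiUj - tΓ i * (ΓDD + Λ)⁻¹ * (tΓ j)ᵀ :=
  stmt_13_general KSS hKSSsym hKSSinv KSD KDD hKDDsym Q hQ hQinv Λ hΛ KSDf hKSDf Kdd hKdd hKddinv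
    KUS KUD tΓ htΓ Φm hΦm ΓDD hΓDD i j hij KUiUj
end
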